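/- arXiv:1704.04606 — 2 statements merged into one kernel-verified Lean document; each statement's English description precedes it below -/
import Mathlib

section
/- Let r ≥ 1 be an integer, z ∈ ℝ_{>0}, v = (v_1, …, v_r) ∈ ℝ_{>0}^r, and s ∈ ℂ with Re(s) > r. Then Barnes' multiple zeta series converges absolutely; i.e., the family ((z + m_1 v_1 + … + m_r v_r)^{−s})_{m ∈ (ℤ_{≥0})^r} is summable in norm. -/
/-!
Since every z + mᵢ vᵢ is at most z + ∑ⱼ mⱼ vⱼ, the norm (z + ∑ⱼ mⱼ vⱼ)^(-Re s) of a summand is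
at most ∏ᵢ (z + mᵢ vᵢ)^(-Re s / r). This product family is summable because each factor
∑ₙ (z + n vᵢ)^(-Re s / r) is a shifted p-series with exponent Re s / r > 1.
-/

open Finset

lemma summable_fintype_prod {ι κ : Type*} [Fintype ι] {f : ι → κ → ℝ}
    (hf₀ : ∀ i k, 0 ≤ f i k) (hf : ∀ i, Summable (f i)) :
    Summable fun x : ι → κ => ∏ i, f i (x i) := by
  classical
  refine summable_of_sum_le (c := ∏ i, ∑' k, f i k)
    (fun x => prod_nonneg fun i _ => hf₀ i (x i)) fun s => ?_
  calc ∑ x ∈ s, ∏ i, f i (x i)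
      ≤ ∑ x ∈ Fintype.piFinset fun i => s.image (· i), ∏ i, f i (x i) :=
        sum_le_sum_of_subset_of_nonneg
          (fun x hx => Fintype.mem_piFinset.2 fun i => mem_image_of_mem (· i) hx)
          fun x _ _ => prod_nonneg fun i _ => hf₀ i (x i)
    _ = ∏ i, ∑ k ∈ s.image (· i), f i k := (prod_univ_sum _ _).symm
    _ ≤ ∏ i, ∑' k, f i k :=
        prod_le_prod (fun i _ => sum_nonneg fun k _ => hf₀ i k)
          fun i _ => (hf i).sum_le_tsum _ fun k _ => hf₀ i k

lemma summable_add_nat_mul_rpow_neg {a b p : ℝ} (ha : 0 ≤ a) (hb : 0 < b) (hp : 1 < p) :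
    Summable fun n : ℕ => (a + n * b) ^ (-p) := by
  refine (((Real.summable_one_div_nat_add_rpow (a / b) p).2 hp).mul_left (b ^ (-p))).congr
    fun n => ?_
  have hn : 0 ≤ (n : ℝ) + a / b := by positivity
  rw [abs_of_nonneg hn, one_div, ← Real.rpow_neg hn, ← Real.mul_rpow hb.le hn, mul_add,
    mul_div_cancel₀ _ hb.ne', mul_comm, add_comm]

lemma Complex.norm_exp_neg_mul_log {w : ℝ} (hw : 0 < w) (s : ℂ) :
    ‖exp (-s * (Real.log w : ℂ))‖ = w ^ (-s.re) := by
  rw [norm_exp, Real.rpow_def_of_pos hw]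
  simp [mul_comm]

lemma Real.rpow_neg_mul_card_le_prod {ι : Type*} [Fintype ι] {a : ι → ℝ} {S t : ℝ}
    (ha : ∀ i, 0 < a i) (haS : ∀ i, a i ≤ S) (hS : 0 ≤ S) (ht : 0 ≤ t) :
    S ^ (-t * Fintype.card ι) ≤ ∏ i, a i ^ (-t) :=
  calc S ^ (-t * Fintype.card ι) = ∏ _i : ι, S ^ (-t) := by
        rw [Real.rpow_mul_natCast hS, prod_const, card_univ]
    _ ≤ ∏ i, a i ^ (-t) :=
        prod_le_prod (fun _ _ => by positivity)
          fun i _ => Real.rpow_le_rpow_of_nonpos (ha i) (haS i) (neg_nonpos.2 ht)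

/-- Barnes' multiple zeta series
`ζ(s, v, z) = ∑_{m ∈ ℤ_{≥0}^r} (z + m·v)^{-s}` (with `w^{-s} := exp(-s log w)`)
converges absolutely for `Re s > r`. -/
theorem barnes_zeta_summable (r : ℕ) (hr : 1 ≤ r) (z : ℝ) (hz : 0 < z)
    (v : Fin r → ℝ) (hv : ∀ i, 0 < v i) (s : ℂ) (hs : (r : ℝ) < s.re) :
    Summable (fun m : Fin r → ℕ =>
      ‖Complex.exp (-s * (Real.log (z + ∑ i, (m i : ℝ) * v i) : ℂ))‖) := by
  have hr₀ : (0 : ℝ) < r := by exact_mod_cast hr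
  set p := s.re / r
  have hp : 1 < p := (one_lt_div hr₀).2 hs
  have hterm : ∀ (m : Fin r → ℕ) i, 0 ≤ (m i : ℝ) * v i := fun m i => by
    have := hv i; positivity
  refine (summable_fintype_prod (f := fun i (n : ℕ) => (z + n * v i) ^ (-p))
      (fun i n => by have := hv i; positivity)
      fun i => summable_add_nat_mul_rpow_neg hz.le (hv i) hp).of_nonneg_of_le
    (fun _ => norm_nonneg _) fun m => ?_
  have hS : 0 < z + ∑ i, (m i : ℝ) * v i :=
    add_pos_of_pos_of_nonneg hz (sum_nonneg fun i _ => hterm m i)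
  rw [Complex.norm_exp_neg_mul_log hS,
    show s.re = p * Fintype.card (Fin r) by simp [p, hr₀.ne'], ← neg_mul]
  refine Real.rpow_neg_mul_card_le_prod (fun i => add_pos_of_pos_of_nonneg hz (hterm m i))
    (fun i => add_le_add_right (single_le_sum (fun j _ => hterm m j) (mem_univ i)) z) hS.le
    (by positivity)
end

section
/- Let I be a countable index set, z : I → ℝ_{>0}, and r₀ ∈ ℝ such that the family ((z_i)^{−s})_{i ∈ I} is absolutely summable for every s ∈ ℂ with Re(s) > r₀. Let α ∈ ℝ_{>0}. Let U ⊆ ℂ be a connected open set containing 0 and the half-plane {s : Re(s) > r₀}, and let f, g be analytic on U with f(s) = ∑_{i ∈ I} (z_i)^{−s} and g(s) = ∑_{i ∈ I} (α z_i)^{−s} for all s with Re(s) > r₀. Then f′(0) − g′(0) = f(0) · log α. (This is the identity LΓ(R) − LΓ(αR) = ζ(0, R) · log α for the log multiple gamma function attached to a countable set R of positive reals whose zeta series continues analytically to 0.) -/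
/-!
On the half-plane of convergence `log (α z_i) = log α + log z_i` gives
`g(s) = α^{-s} f(s)`. Both sides are analytic on the connected set `U`, so by the identity
theorem they agree near `0`, and differentiating `α^{-s} f(s)` at `s = 0` yields
`g'(0) = f'(0) - f(0) log α`.
-/

open Filter Topology Set

theorem tsum_cexp_neg_mul_log_mul {I : Type*} (z : I → ℝ) (hz : ∀ i, 0 < z i) {α : ℝ}
    (hα : 0 < α) (s : ℂ) :
    ∑' i, Complex.exp (-s * (Real.log (α * z i) : ℂ)) =
      Complex.exp (-s * (Real.log α : ℂ)) * ∑' i, Complex.exp (-s * (Real.log (z i) : ℂ)) := by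
  rw [← tsum_mul_left]
  congr 1 with i
  rw [Real.log_mul hα.ne' (hz i).ne', Complex.ofReal_add, mul_add, Complex.exp_add]

theorem AnalyticOnNhd.eventuallyEq_of_eqOn_of_isOpen {E F : Type*} [NormedAddCommGroup E]
    [NormedSpace ℂ E] [NormedAddCommGroup F] [NormedSpace ℂ F] {f g : E → F} {U V : Set E}
    (hf : AnalyticOnNhd ℂ f U) (hg : AnalyticOnNhd ℂ g U) (hU : IsOpen U)
    (hUc : IsPreconnected U) (hV : IsOpen V) (hVne : V.Nonempty) (hVU : V ⊆ U)
    (hfg : EqOn f g V) {x : E} (hx : x ∈ U) : f =ᶠ[𝓝 x] g := by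
  obtain ⟨y, hy⟩ := hVne
  have hfgU : EqOn f g U :=
    hf.eqOn_of_preconnected_of_eventuallyEq hg hUc (hVU hy) (hfg.eventuallyEq_of_mem (hV.mem_nhds hy))
  exact hfgU.eventuallyEq_of_mem (hU.mem_nhds hx)

theorem HasDerivAt.cexp_neg_mul_mul {f : ℂ → ℂ} {f' x : ℂ} (c : ℂ) (hf : HasDerivAt f f' x) :
    HasDerivAt (fun s => Complex.exp (-s * c) * f s)
      (Complex.exp (-x * c) * (f' - c * f x)) x := by
  have hexp : HasDerivAt (fun s => Complex.exp (-s * c)) (Complex.exp (-x * c) * -c) x :=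
    (((hasDerivAt_id x).neg).mul_const c).cexp.congr_deriv (by simp)
  exact (hexp.fun_mul hf).congr_deriv (by ring)

theorem logGamma_scaling_general (I : Type*) (z : I → ℝ) (hz : ∀ i, 0 < z i) (r₀ : ℝ)
    (α : ℝ) (hα : 0 < α)
    (U : Set ℂ) (hUopen : IsOpen U) (hUconn : IsConnected U)
    (hU0 : (0 : ℂ) ∈ U) (hUhp : {s : ℂ | r₀ < s.re} ⊆ U)
    (f g : ℂ → ℂ) (hf : AnalyticOnNhd ℂ f U) (hg : AnalyticOnNhd ℂ g U)
    (hfs : ∀ s : ℂ, r₀ < s.re → f s = ∑' i, Complex.exp (-s * (Real.log (z i) : ℂ)))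
    (hgs : ∀ s : ℂ, r₀ < s.re → g s = ∑' i, Complex.exp (-s * (Real.log (α * z i) : ℂ))) :
    deriv f 0 - deriv g 0 = f 0 * (Real.log α : ℂ) := by
  set c : ℂ := (Real.log α : ℂ)
  set h : ℂ → ℂ := fun s => Complex.exp (-s * c) * f s
  have hh : AnalyticOnNhd ℂ h U := fun x hx =>
    (analyticAt_id.neg.mul analyticAt_const).cexp.mul (hf x hx)
  have hgh : EqOn g h {s : ℂ | r₀ < s.re} := fun s hs => by
    simp only [h, c, hgs s hs, hfs s hs, tsum_cexp_neg_mul_log_mul z hz hα]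
  have hgh0 : g =ᶠ[𝓝 0] h :=
    hg.eventuallyEq_of_eqOn_of_isOpen hh hUopen hUconn.isPreconnected
      (isOpen_lt continuous_const Complex.continuous_re) ⟨(r₀ + 1 : ℝ), by simp⟩ hUhp hgh hU0
  have hderiv : HasDerivAt g (deriv f 0 - c * f 0) 0 := by
    simpa using hgh0.hasDerivAt_iff.mpr
      ((hf 0 hU0).differentiableAt.hasDerivAt.cexp_neg_mul_mul c)
  rw [hderiv.deriv]
  ring

/-- The identity `LΓ(R) - LΓ(αR) = ζ(0, R) · log α`: if `f`, `g` are analytic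
continuations (to a connected open set `U` containing `0` and the half-plane `Re s > r₀`) of
`∑_i z_i^{-s}` and `∑_i (α z_i)^{-s}` respectively, then `f'(0) - g'(0) = f(0) log α`. -/
theorem logGamma_scaling (I : Type*) [Countable I] (z : I → ℝ) (hz : ∀ i, 0 < z i) (r₀ : ℝ)
    (hsum : ∀ s : ℂ, r₀ < s.re →
      Summable (fun i => ‖Complex.exp (-s * (Real.log (z i) : ℂ))‖))
    (α : ℝ) (hα : 0 < α)
    (U : Set ℂ) (hUopen : IsOpen U) (hUconn : IsConnected U)
    (hU0 : (0 : ℂ) ∈ U) (hUhp : {s : ℂ | r₀ < s.re} ⊆ U)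
    (f g : ℂ → ℂ) (hf : AnalyticOnNhd ℂ f U) (hg : AnalyticOnNhd ℂ g U)
    (hfs : ∀ s : ℂ, r₀ < s.re → f s = ∑' i, Complex.exp (-s * (Real.log (z i) : ℂ)))
    (hgs : ∀ s : ℂ, r₀ < s.re → g s = ∑' i, Complex.exp (-s * (Real.log (α * z i) : ℂ))) :
    deriv f 0 - deriv g 0 = f 0 * (Real.log α : ℂ) :=
  logGamma_scaling_general I z hz r₀ α hα U hUopen hUconn hU0 hUhp f g hf hg hfs hgs
end
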